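/- Every matrix unit E_{n,m} (1 ≤ n, m ≤ d) lies in S_d, the span of products of d tridiagonal Toeplitz matrices. -/
import Mathlib


/-- `E_{n,m}` (1-based positions): 1 in position `(n, m)`, zeros elsewhere. -/
def matUnit (d : ℕ) (n m : ℤ) : Matrix (Fin d) (Fin d) ℝ :=
  Matrix.of fun i j => if (i : ℤ) + 1 = n ∧ (j : ℤ) + 1 = m then 1 else 0

/-- `To_d(1)`: tridiagonal Toeplitz matrices, `x_{ij} = w_{j-i}` for `|i-j| ≤ 1`, else `0`. -/
def Tod1 (d : ℕ) : Set (Matrix (Fin d) (Fin d) ℝ) :=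
  {A | ∃ w : ℤ → ℝ, ∀ i j : Fin d,
    A i j = if |(i : ℤ) - (j : ℤ)| ≤ 1 then w ((j : ℤ) - (i : ℤ)) else 0}

/-- `S_N`: finite sums of (ordered) products of `N` tridiagonal Toeplitz matrices. -/
def SN (d N : ℕ) : Set (Matrix (Fin d) (Fin d) ℝ) :=
  {A | ∃ n : ℕ, ∃ T : Fin n → Fin N → Matrix (Fin d) (Fin d) ℝ,
    (∀ i j, T i j ∈ Tod1 d) ∧ A = ∑ i, (List.ofFn (T i)).prod}

/-! ### Auxiliary material: shift matrices, their powers and products -/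

/-- The lower shift matrix `L` (ones on the subdiagonal). -/
def shL (d : ℕ) : Matrix (Fin d) (Fin d) ℝ :=
  Matrix.of fun i j => if (i : ℤ) = (j : ℤ) + 1 then 1 else 0

/-- The upper shift matrix `R` (ones on the superdiagonal). -/
def shR (d : ℕ) : Matrix (Fin d) (Fin d) ℝ :=
  Matrix.of fun i j => if (i : ℤ) + 1 = (j : ℤ) then 1 else 0

lemma one_mem_Tod1 (d : ℕ) : (1 : Matrix (Fin d) (Fin d) ℝ) ∈ Tod1 d := by
  refine ⟨fun z => if z = 0 then 1 else 0, fun i j => ?_⟩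
  rw [Matrix.one_apply]
  simp only [abs_le]
  split_ifs <;> first | rfl | omega

lemma shL_mem_Tod1 (d : ℕ) : shL d ∈ Tod1 d := by
  refine ⟨fun z => if z = -1 then 1 else 0, fun i j => ?_⟩
  simp only [shL, Matrix.of_apply, abs_le]
  split_ifs <;> first | rfl | omega

lemma shR_mem_Tod1 (d : ℕ) : shR d ∈ Tod1 d := by
  refine ⟨fun z => if z = 1 then 1 else 0, fun i j => ?_⟩
  simp only [shR, Matrix.of_apply, abs_le]
  split_ifs <;> first | rfl | omega

/-- Generic single-point indicator sum over `Fin d`. -/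
lemma sum_indicator (d : ℕ) (P : Prop) [Decidable P] (t : ℤ) :
    (∑ c : Fin d, if P ∧ (c : ℤ) = t then (1:ℝ) else 0)
      = if P ∧ 0 ≤ t ∧ t < d then 1 else 0 := by
  by_cases hP : P
  · simp only [hP, true_and]
    by_cases ht : 0 ≤ t ∧ t < d
    · rw [if_pos ht,
        Finset.sum_eq_single_of_mem (⟨t.toNat, by omega⟩ : Fin d) (Finset.mem_univ _)]
      · rw [if_pos (by simp only [Fin.val_mk]; omega)]
      · intro c _ hc
        rw [if_neg]
        intro h
        exact hc (Fin.ext (by simp only [Fin.val_mk]; omega))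
    · rw [if_neg ht, Finset.sum_eq_zero]
      intro c _
      rw [if_neg]
      have := c.isLt
      omega
  · simp only [hP, false_and, if_false, Finset.sum_const_zero]

lemma shL_pow (d p : ℕ) (i j : Fin d) :
    ((shL d) ^ p) i j = if (i : ℤ) = (j : ℤ) + p then 1 else 0 := by
  induction p generalizing i j with
  | zero =>
    rw [pow_zero, Matrix.one_apply]
    split_ifs <;> first | rfl | omega
  | succ p ih =>
    rw [pow_succ, Matrix.mul_apply]
    have key : ∀ c : Fin d, ((shL d) ^ p) i c * (shL d) c j
        = if ((i:ℤ) = (j:ℤ) + (p+1:ℕ) ∧ (c:ℤ) = (j:ℤ) + 1) then 1 else 0 := by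
      intro c
      rw [ih, shL]
      simp only [Matrix.of_apply]
      push_cast
      split_ifs <;> first | (exfalso; omega) | norm_num
    simp only [key]
    rw [sum_indicator]
    have hi := i.isLt
    have hj := j.isLt
    split_ifs <;> first | (exfalso; omega) | rfl

lemma shR_pow (d q : ℕ) (i j : Fin d) :
    ((shR d) ^ q) i j = if (i : ℤ) + q = (j : ℤ) then 1 else 0 := by
  induction q generalizing i j with
  | zero =>
    rw [pow_zero, Matrix.one_apply]
    split_ifs <;> first | rfl | omega
  | succ q ih =>
    rw [pow_succ, Matrix.mul_apply]
    have key : ∀ c : Fin d, ((shR d) ^ q) i c * (shR d) c j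
        = if ((i:ℤ) + (q+1:ℕ) = (j:ℤ) ∧ (c:ℤ) = (j:ℤ) - 1) then 1 else 0 := by
      intro c
      rw [ih, shR]
      simp only [Matrix.of_apply]
      push_cast
      split_ifs <;> first | (exfalso; omega) | norm_num
    simp only [key]
    rw [sum_indicator]
    have hi := i.isLt
    have hj := j.isLt
    split_ifs <;> first | (exfalso; omega) | rfl

lemma LR_apply (d p q : ℕ) (i j : Fin d) :
    ((shL d) ^ p * (shR d) ^ q) i j
      = if ((i:ℤ) = (j:ℤ) - q + p ∧ (q:ℤ) ≤ (j:ℤ)) then 1 else 0 := by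
  rw [Matrix.mul_apply]
  have key : ∀ c : Fin d, ((shL d) ^ p) i c * ((shR d) ^ q) c j
      = if (((i:ℤ) = (j:ℤ) - q + p) ∧ (c:ℤ) = (j:ℤ) - q) then 1 else 0 := by
    intro c
    rw [shL_pow, shR_pow]
    split_ifs <;> first | (exfalso; omega) | norm_num
  simp only [key]
  rw [sum_indicator]
  have hj := j.isLt
  split_ifs <;> first | (exfalso; omega) | rfl

lemma RL_apply (d p q : ℕ) (i j : Fin d) :
    ((shR d) ^ q * (shL d) ^ p) i j
      = if ((i:ℤ) + q = (j:ℤ) + p ∧ (i:ℤ) + q < d) then 1 else 0 := by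
  rw [Matrix.mul_apply]
  have key : ∀ c : Fin d, ((shR d) ^ q) i c * ((shL d) ^ p) c j
      = if (((i:ℤ) + q = (j:ℤ) + p) ∧ (c:ℤ) = (i:ℤ) + q) then 1 else 0 := by
    intro c
    rw [shL_pow, shR_pow]
    split_ifs <;> first | (exfalso; omega) | norm_num
  simp only [key]
  rw [sum_indicator]
  have hi := i.isLt
  split_ifs <;> first | (exfalso; omega) | rfl

/-! ### Auxiliary material: membership and closure properties of `SN` -/

lemma ofFn_prod_pattern {M : Type*} [Monoid M] (a b : M) :
    ∀ (N p q : ℕ), p + q ≤ N →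
    (List.ofFn (fun j : Fin N =>
      if (j : ℕ) < p then a else if (j : ℕ) < p + q then b else 1)).prod = a ^ p * b ^ q := by
  intro N
  induction N with
  | zero =>
    intro p q h
    obtain ⟨rfl, rfl⟩ : p = 0 ∧ q = 0 := by omega
    simp
  | succ N ih =>
    intro p q h
    rw [List.ofFn_succ, List.prod_cons]
    match p with
    | p' + 1 =>
      have ht : (fun j : Fin N =>
          if ((j.succ : Fin (N+1)) : ℕ) < p' + 1 then a
          else if ((j.succ : Fin (N+1)) : ℕ) < p' + 1 + q then b else 1)
          = fun j : Fin N => if (j : ℕ) < p' then a else if (j : ℕ) < p' + q then b else 1 := by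
        funext j
        simp only [Fin.val_succ]
        split_ifs <;> first | rfl | omega
      simp only [Fin.val_zero, Nat.zero_lt_succ, if_pos]
      rw [ht, ih p' q (by omega), ← mul_assoc, ← pow_succ']
    | 0 =>
      match q with
      | q' + 1 =>
        have ht : (fun j : Fin N =>
            if ((j.succ : Fin (N+1)) : ℕ) < 0 then a
            else if ((j.succ : Fin (N+1)) : ℕ) < 0 + (q' + 1) then b else 1)
            = fun j : Fin N => if (j : ℕ) < 0 then a else if (j : ℕ) < 0 + q' then b else 1 := by
          funext j
          simp only [Fin.val_succ]
          split_ifs <;> first | rfl | omega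
        have hh : (if ((0 : Fin (N+1)) : ℕ) < 0 then a
            else if ((0 : Fin (N+1)) : ℕ) < 0 + (q' + 1) then b else 1) = b := by
          simp
        rw [hh, ht, ih 0 q' (by omega), pow_zero, one_mul, one_mul, ← pow_succ']
      | 0 =>
        have ht : (fun j : Fin N =>
            if ((j.succ : Fin (N+1)) : ℕ) < 0 then a
            else if ((j.succ : Fin (N+1)) : ℕ) < 0 + 0 then b else 1)
            = fun j : Fin N => if (j : ℕ) < 0 then a else if (j : ℕ) < 0 + 0 then b else 1 := by
          funext j
          split_ifs <;> first | rfl | omega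
        have hh : (if ((0 : Fin (N+1)) : ℕ) < 0 then a
            else if ((0 : Fin (N+1)) : ℕ) < 0 + 0 then b else 1) = 1 := by
          simp
        rw [hh, ht, ih 0 0 (by omega), one_mul]

lemma pow_mul_pow_mem_SN {d N : ℕ} {a b : Matrix (Fin d) (Fin d) ℝ}
    (ha : a ∈ Tod1 d) (hb : b ∈ Tod1 d)
    (p q : ℕ) (h : p + q ≤ N) : a ^ p * b ^ q ∈ SN d N := by
  refine ⟨1, fun _ => fun j : Fin N =>
    if (j : ℕ) < p then a else if (j : ℕ) < p + q then b else 1, ?_, ?_⟩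
  · intro i j
    dsimp only
    split_ifs
    · exact ha
    · exact hb
    · exact one_mem_Tod1 d
  · rw [Finset.sum_const, Finset.card_univ, Fintype.card_fin, one_smul]
    exact (ofFn_prod_pattern a b N p q h).symm

lemma SN_add {d N : ℕ} {A B : Matrix (Fin d) (Fin d) ℝ}
    (hA : A ∈ SN d N) (hB : B ∈ SN d N) : A + B ∈ SN d N := by
  obtain ⟨n1, T1, hT1, rfl⟩ := hA
  obtain ⟨n2, T2, hT2, rfl⟩ := hB
  refine ⟨n1 + n2, Fin.addCases T1 T2, ?_, ?_⟩
  · intro i j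
    refine Fin.addCases (fun i1 => ?_) (fun i2 => ?_) i
    · simp only [Fin.addCases_left]; exact hT1 i1 j
    · simp only [Fin.addCases_right]; exact hT2 i2 j
  · rw [Fin.sum_univ_add]
    congr 1
    · exact Finset.sum_congr rfl fun i _ => by simp only [Fin.addCases_left]
    · exact Finset.sum_congr rfl fun i _ => by simp only [Fin.addCases_right]

lemma ofFn_prod_smul_head {d N : ℕ} (hN : 1 ≤ N) (s : ℝ)
    (g : Fin N → Matrix (Fin d) (Fin d) ℝ) :
    (List.ofFn (fun j : Fin N => if (j : ℕ) = 0 then s • g j else g j)).prod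
      = s • (List.ofFn g).prod := by
  obtain ⟨N', rfl⟩ : ∃ N', N = N' + 1 := ⟨N - 1, by omega⟩
  rw [List.ofFn_succ, List.ofFn_succ, List.prod_cons, List.prod_cons]
  have ht : (fun j : Fin N' =>
      if ((j.succ : Fin (N'+1)) : ℕ) = 0 then s • g j.succ else g j.succ)
      = fun j : Fin N' => g j.succ := by
    funext j
    simp [Fin.val_succ]
  rw [ht]
  simp [smul_mul_assoc]

lemma SN_neg {d N : ℕ} (hN : 1 ≤ N) {A : Matrix (Fin d) (Fin d) ℝ}
    (hA : A ∈ SN d N) : -A ∈ SN d N := by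
  obtain ⟨n, T, hT, rfl⟩ := hA
  refine ⟨n, fun i => fun j => if (j : ℕ) = 0 then (-1 : ℝ) • T i j else T i j, ?_, ?_⟩
  · intro i j
    dsimp only
    split_ifs
    · obtain ⟨w, hw⟩ := hT i j
      exact ⟨fun z => (-1) * w z, fun a b => by
        simp only [Matrix.smul_apply, hw a b, smul_eq_mul, mul_ite, mul_zero]⟩
    · exact hT i j
  · rw [← Finset.sum_neg_distrib]
    refine Finset.sum_congr rfl fun i _ => ?_
    rw [ofFn_prod_smul_head hN, neg_one_smul]

/-- Every matrix unit `E_{n,m}` with `1 ≤ n, m ≤ d` lies in `S_d`. -/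
theorem matUnit_mem_SN (d n m : ℕ) (hn1 : 1 ≤ n) (hn : n ≤ d) (hm1 : 1 ≤ m)
    (hm : m ≤ d) : matUnit d n m ∈ SN d d := by
  have hd : 1 ≤ d := le_trans hn1 hn
  have hL := shL_mem_Tod1 d
  have hR := shR_mem_Tod1 d
  rcases le_or_gt (n + m) d with hA | hAB
  · -- case `n + m ≤ d`:  E = L^{n-1} R^{m-1} - L^n R^m
    have hkey : matUnit d n m
        = (shL d) ^ (n-1) * (shR d) ^ (m-1) + -((shL d) ^ n * (shR d) ^ m) := by
      ext i j
      simp only [Matrix.add_apply, Matrix.neg_apply, LR_apply, matUnit, Matrix.of_apply]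
      split_ifs <;> first | (exfalso; omega) | norm_num
    rw [hkey]
    exact SN_add (pow_mul_pow_mem_SN hL hR (n-1) (m-1) (by omega))
      (SN_neg hd (pow_mul_pow_mem_SN hL hR n m (by omega)))
  rcases le_or_gt (d + 2) (n + m) with hB | hMid
  · -- case `n + m ≥ d + 2`:  E = R^{d-n} L^{d-m} - R^{d-n+1} L^{d-m+1}
    have hkey : matUnit d n m
        = (shR d) ^ (d-n) * (shL d) ^ (d-m)
          + -((shR d) ^ (d-n+1) * (shL d) ^ (d-m+1)) := by
      ext i j
      simp only [Matrix.add_apply, Matrix.neg_apply, RL_apply, matUnit, Matrix.of_apply]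
      split_ifs <;> first | (exfalso; omega) | norm_num
    rw [hkey]
    exact SN_add (pow_mul_pow_mem_SN hR hL (d-n) (d-m) (by omega))
      (SN_neg hd (pow_mul_pow_mem_SN hR hL (d-n+1) (d-m+1) (by omega)))
  · -- case `n + m = d + 1`:  E = L^{n-1} R^{m-1} + R^{d-n} L^{d-m} - L^{n-m} R^{m-n}
    have hMid' : n + m = d + 1 := by omega
    have hkey : matUnit d n m
        = (shL d) ^ (n-1) * (shR d) ^ (m-1)
          + (shR d) ^ (d-n) * (shL d) ^ (d-m)
          + -((shL d) ^ (n-m) * (shR d) ^ (m-n)) := by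
      ext i j
      simp only [Matrix.add_apply, Matrix.neg_apply, LR_apply, RL_apply, matUnit,
        Matrix.of_apply]
      have hi := i.isLt
      have hj := j.isLt
      split_ifs <;> first | (exfalso; omega) | norm_num
    rw [hkey]
    exact SN_add (SN_add (pow_mul_pow_mem_SN hL hR (n-1) (m-1) (by omega))
        (pow_mul_pow_mem_SN hR hL (d-n) (d-m) (by omega)))
      (SN_neg hd (pow_mul_pow_mem_SN hL hR (n-m) (m-n) (by omega)))
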